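/- The function ϑ is radially non-increasing: for all x₁, x₂ ∈ ℝ^d with |x₁| ≤ |x₂|, one has ϑ(x₂) ≤ ϑ(x₁). -/

import Mathlib

open MeasureTheory

/-- The standard bump function `ω(x) = exp(−1/(1−|x|²))` for `|x| < 1`, `0` otherwise. -/
noncomputable def stdBump (d : ℕ) (x : EuclideanSpace ℝ (Fin d)) : ℝ :=
  if ‖x‖ < 1 then Real.exp (-1 / (1 - ‖x‖ ^ 2)) else 0

/-- The cut-off function `ϑ(x) = 2^{−d} ∫ 𝟙{|y−x| ≤ 1} ω(2y) dy`. -/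
noncomputable def cutoff (d : ℕ) (x : EuclideanSpace ℝ (Fin d)) : ℝ :=
  (2 : ℝ) ^ (-(d : ℤ)) *
    ∫ y in {y : EuclideanSpace ℝ (Fin d) | ‖y - x‖ ≤ 1}, stdBump d ((2 : ℝ) • y)

/-!
Let `R` be the reflection in the perpendicular bisector of `x₁` and `x₂`. It preserves Lebesgue
measure and exchanges the balls `B(x₁, 1)` and `B(x₂, 1)`, so pairing `y` with `R y` compares the
two integrals pointwise. The only unmatched points are those of `B(x₁, 1) \ B(x₂, 1)` and their
images; such a `y` lies on the same side of the bisector as `x₁`, and so does the origin because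
`‖x₁‖ ≤ ‖x₂‖`, hence `‖y‖ ≤ ‖R y‖`. Since `y ↦ ω(2y)` is radially non-increasing, the integrand
can only lose mass when moving from `B(x₁, 1)` to `B(x₂, 1)`.
-/

open Metric InnerProductSpace

theorem integral_le_integral_of_add_comp_involutive_le {α : Type*} [MeasurableSpace α]
    {μ : Measure α} {R : α → α} (hR : MeasurePreserving R μ μ) (hinv : Function.Involutive R)
    {f g : α → ℝ} (hf : Integrable f μ) (hg : Integrable g μ)
    (hfg : ∀ x, f x + f (R x) ≤ g x + g (R x)) :
    ∫ x, f x ∂μ ≤ ∫ x, g x ∂μ := by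
  have hR' : MeasurePreserving (MeasurableEquiv.ofInvolutive R hinv hR.measurable) μ μ := hR
  have hfR : Integrable (fun x => f (R x)) μ := hR.integrable_comp_of_integrable hf
  have hgR : Integrable (fun x => g (R x)) μ := hR.integrable_comp_of_integrable hg
  have h : ∫ x, f x + f (R x) ∂μ ≤ ∫ x, g x + g (R x) ∂μ :=
    integral_mono (hf.add hfR) (hg.add hgR) hfg
  have hf_comp : ∫ x, f (R x) ∂μ = ∫ x, f x ∂μ := hR'.integral_comp' f
  have hg_comp : ∫ x, g (R x) ∂μ = ∫ x, g x ∂μ := hR'.integral_comp' g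
  rw [integral_add hf hfR, integral_add hg hgR, hf_comp, hg_comp] at h
  linarith

section PerpBisectorReflection

variable {E : Type*} [NormedAddCommGroup E] [InnerProductSpace ℝ E]

noncomputable def perpBisectorReflection (a b : E) (y : E) : E :=
  midpoint ℝ a b + (ℝ ∙ (b - a))ᗮ.reflection (y - midpoint ℝ a b)

theorem perpBisectorReflection_involutive (a b : E) :
    Function.Involutive (perpBisectorReflection a b) := fun y => by
  simp [perpBisectorReflection]

theorem dist_perpBisectorReflection (a b y z : E) :
    dist (perpBisectorReflection a b y) (perpBisectorReflection a b z) = dist y z := by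
  simp only [perpBisectorReflection, dist_add_left, LinearIsometryEquiv.dist_map, dist_sub_right]

theorem perpBisectorReflection_left (a b : E) : perpBisectorReflection a b a = b := by
  have h : a - midpoint ℝ a b = (-2⁻¹ : ℝ) • (b - a) := by
    rw [midpoint_eq_smul_add, invOf_eq_inv]; module
  rw [perpBisectorReflection, h, LinearIsometryEquiv.map_smul,
    Submodule.reflection_orthogonalComplement_singleton_eq_neg, midpoint_eq_smul_add, invOf_eq_inv]
  module

theorem perpBisectorReflection_right (a b : E) : perpBisectorReflection a b b = a := by
  simpa only [perpBisectorReflection_left] using perpBisectorReflection_involutive a b a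

theorem perpBisectorReflection_mem_closedBall_left {a b y : E} {r : ℝ} :
    perpBisectorReflection a b y ∈ closedBall a r ↔ y ∈ closedBall b r := by
  rw [mem_closedBall, mem_closedBall, ← dist_perpBisectorReflection a b y b,
    perpBisectorReflection_right]

theorem perpBisectorReflection_mem_closedBall_right {a b y : E} {r : ℝ} :
    perpBisectorReflection a b y ∈ closedBall b r ↔ y ∈ closedBall a r := by
  rw [mem_closedBall, mem_closedBall, ← dist_perpBisectorReflection a b y a,
    perpBisectorReflection_left]

theorem measurePreserving_perpBisectorReflection [FiniteDimensional ℝ E] [MeasurableSpace E]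
    [BorelSpace E] (a b : E) : MeasurePreserving (perpBisectorReflection a b) :=
  (measurePreserving_add_left volume _).comp
    ((LinearIsometryEquiv.measurePreserving _).comp (measurePreserving_sub_right volume _))

theorem perpBisectorReflection_apply (a b y : E) :
    perpBisectorReflection a b y =
      y - (2 * ⟪b - a, y - midpoint ℝ a b⟫_ℝ / ‖b - a‖ ^ 2) • (b - a) := by
  rw [perpBisectorReflection, Submodule.reflection_orthogonal_apply,
    Submodule.reflection_singleton_apply]
  module

theorem norm_sub_sq_mul_norm_perpBisectorReflection_sq_sub (a b y : E) :
    ‖b - a‖ ^ 2 * (‖perpBisectorReflection a b y‖ ^ 2 - ‖y‖ ^ 2) =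
      (‖y - b‖ ^ 2 - ‖y - a‖ ^ 2) * (‖b‖ ^ 2 - ‖a‖ ^ 2) := by
  rcases eq_or_ne a b with rfl | hab
  · simp
  have hv : ‖b - a‖ ≠ 0 := by simpa [sub_eq_zero] using hab.symm
  set m := midpoint ℝ a b with hm_def
  have hy : ‖y - b‖ ^ 2 - ‖y - a‖ ^ 2 = -(2 * ⟪b - a, y - m⟫_ℝ) := by
    rw [hm_def, midpoint_eq_smul_add, invOf_eq_inv]
    simp only [← real_inner_self_eq_norm_sq, inner_sub_left, inner_sub_right, inner_add_right,
      inner_smul_right, real_inner_comm a b, real_inner_comm a y, real_inner_comm b y]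
    ring
  have hm : ‖b‖ ^ 2 - ‖a‖ ^ 2 = 2 * ⟪b - a, m⟫_ℝ := by
    rw [hm_def, midpoint_eq_smul_add, invOf_eq_inv]
    simp only [← real_inner_self_eq_norm_sq, inner_sub_left, inner_add_right, inner_smul_right,
      real_inner_comm a b]
    ring
  have hmy : ⟪b - a, y⟫_ℝ = ⟪b - a, y - m⟫_ℝ + ⟪b - a, m⟫_ℝ := by
    rw [inner_sub_right]; ring
  rw [perpBisectorReflection_apply, norm_sub_sq_real (x := y), norm_smul, real_inner_smul_right,
    real_inner_comm (b - a) y, hmy, Real.norm_eq_abs, mul_pow, sq_abs, hy, hm]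
  field_simp
  ring

theorem norm_le_norm_perpBisectorReflection {a b y : E} (hab : ‖a‖ ≤ ‖b‖)
    (hy : ‖y - a‖ ≤ ‖y - b‖) : ‖y‖ ≤ ‖perpBisectorReflection a b y‖ := by
  rcases eq_or_ne a b with rfl | hne
  · simp [perpBisectorReflection_apply]
  have hv : 0 < ‖b - a‖ ^ 2 := pow_pos (norm_pos_iff.2 (sub_ne_zero.2 hne.symm)) 2
  have h := norm_sub_sq_mul_norm_perpBisectorReflection_sq_sub a b y
  have hprod : 0 ≤ (‖y - b‖ ^ 2 - ‖y - a‖ ^ 2) * (‖b‖ ^ 2 - ‖a‖ ^ 2) := by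
    apply mul_nonneg <;> nlinarith [norm_nonneg a, norm_nonneg (y - a)]
  have hsq : ‖y‖ ^ 2 ≤ ‖perpBisectorReflection a b y‖ ^ 2 := by nlinarith
  exact (pow_le_pow_iff_left₀ (norm_nonneg _) (norm_nonneg _) two_ne_zero).1 hsq

end PerpBisectorReflection

theorem integral_closedBall_le_of_norm_le {E : Type*} [NormedAddCommGroup E]
    [InnerProductSpace ℝ E] [FiniteDimensional ℝ E] [MeasurableSpace E] [BorelSpace E]
    {g : E → ℝ} (hg : Integrable g) (hg_anti : ∀ y z : E, ‖y‖ ≤ ‖z‖ → g z ≤ g y)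
    {a b : E} (hab : ‖a‖ ≤ ‖b‖) (r : ℝ) :
    ∫ y in closedBall b r, g y ≤ ∫ y in closedBall a r, g y := by
  have key (y : E) (ha : y ∈ closedBall a r) (hb : y ∉ closedBall b r) :
      g (perpBisectorReflection a b y) ≤ g y := by
    refine hg_anti _ _ (norm_le_norm_perpBisectorReflection hab ?_)
    rw [mem_closedBall_iff_norm] at ha
    rw [mem_closedBall_iff_norm, not_le] at hb
    linarith
  rw [← integral_indicator measurableSet_closedBall, ← integral_indicator measurableSet_closedBall]
  refine integral_le_integral_of_add_comp_involutive_le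
    (measurePreserving_perpBisectorReflection a b) (perpBisectorReflection_involutive a b)
    (hg.indicator measurableSet_closedBall) (hg.indicator measurableSet_closedBall) fun y => ?_
  classical
  by_cases ha : y ∈ closedBall a r <;> by_cases hb : y ∈ closedBall b r <;>
    simp only [Set.indicator_apply, ha, hb, perpBisectorReflection_mem_closedBall_left,
      perpBisectorReflection_mem_closedBall_right, if_true, if_false, zero_add, add_zero, le_refl]
  · exact key y ha hb
  · simpa only [perpBisectorReflection_involutive a b y] using
      key _ (perpBisectorReflection_mem_closedBall_left.2 hb)
        (mt perpBisectorReflection_mem_closedBall_right.1 ha)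

theorem stdBump_nonneg (d : ℕ) (x : EuclideanSpace ℝ (Fin d)) : 0 ≤ stdBump d x := by
  unfold stdBump
  split_ifs <;> positivity

theorem stdBump_le_stdBump {d : ℕ} {x y : EuclideanSpace ℝ (Fin d)} (h : ‖x‖ ≤ ‖y‖) :
    stdBump d y ≤ stdBump d x := by
  unfold stdBump
  split_ifs with hy hx hx
  · have hy' : 0 < 1 - ‖y‖ ^ 2 := by nlinarith [norm_nonneg y]
    refine Real.exp_le_exp.2 ?_
    rw [neg_div, neg_div, neg_le_neg_iff]
    exact one_div_le_one_div_of_le hy' (by nlinarith [norm_nonneg x])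
  · exact absurd (h.trans_lt hy) hx
  · positivity
  · rfl

theorem measurable_stdBump (d : ℕ) : Measurable (stdBump d) :=
  Measurable.ite (measurableSet_lt measurable_norm measurable_const) (by fun_prop)
    measurable_const

theorem integrable_stdBump (d : ℕ) : Integrable (stdBump d) := by
  have hbound : Integrable ((ball (0 : EuclideanSpace ℝ (Fin d)) 1).indicator
      fun _ => stdBump d 0) :=
    (integrableOn_const measure_ball_lt_top.ne).integrable_indicator measurableSet_ball
  refine hbound.mono' (measurable_stdBump d).aestronglyMeasurable (ae_of_all _ fun x => ?_)
  rw [Real.norm_of_nonneg (stdBump_nonneg d x)]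
  by_cases hx : ‖x‖ < 1
  · rw [Set.indicator_of_mem (mem_ball_zero_iff.2 hx)]
    exact stdBump_le_stdBump (by simp)
  · rw [Set.indicator_of_notMem (mt mem_ball_zero_iff.1 hx), stdBump, if_neg hx]

/-- The cut-off function `ϑ` is radially non-increasing. -/
theorem stmt14 {d : ℕ} (x₁ x₂ : EuclideanSpace ℝ (Fin d)) (hx : ‖x₁‖ ≤ ‖x₂‖) :
    cutoff d x₂ ≤ cutoff d x₁ := by
  have hball (x : EuclideanSpace ℝ (Fin d)) : {y | ‖y - x‖ ≤ 1} = closedBall x 1 := by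
    ext y; simp [dist_eq_norm]
  have hanti (y z : EuclideanSpace ℝ (Fin d)) (h : ‖y‖ ≤ ‖z‖) :
      stdBump d ((2 : ℝ) • z) ≤ stdBump d ((2 : ℝ) • y) :=
    stdBump_le_stdBump (by simpa only [norm_smul] using mul_le_mul_of_nonneg_left h (norm_nonneg _))
  unfold cutoff
  rw [hball, hball]
  exact mul_le_mul_of_nonneg_left (integral_closedBall_le_of_norm_le
    ((integrable_stdBump d).comp_smul two_ne_zero) hanti hx 1) (by positivity)
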